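/- arXiv:2405.20390 — 3 statements merged into one kernel-verified Lean document; each statement's English description precedes it below -/
import Mathlib

section
/- Let U : E → ℝ be continuously differentiable, γ > 0, and let g, ξ : ℝ → E satisfy g'(t) = ξ(t), ξ'(t) = −γξ(t) − ∇U(g(t)) for t ≥ 0. Set u := U(g(0)) + (1/2)‖ξ(0)‖², and let S₀ be the connected component of the sublevel set {x ∈ E : U(x) ≤ u} containing g(0). Then g(t) ∈ S₀ for all t ≥ 0. (Corollary 3.3, Euclidean instance.) -/
/-!
Along the flow the total energy `U g + ½‖ξ‖²` has derivative `-γ‖ξ‖² ≤ 0`, so on `[0, t]` the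
curve `g` stays in the sublevel set `{U ≤ u}`. Its image of `[0, t]` is connected and contains
`g 0`, hence lies in the connected component `S₀`.
-/

open RealInnerProductSpace Set

theorem HasGradientAt.comp_hasDerivAt {E : Type*} [NormedAddCommGroup E]
    [InnerProductSpace ℝ E] [CompleteSpace E] {f : E → ℝ} {f' : E} {g : ℝ → E} {g' : E} {t : ℝ}
    (hf : HasGradientAt f f' (g t)) (hg : HasDerivAt g g' t) :
    HasDerivAt (fun s => f (g s)) ⟪f', g'⟫ t :=
  hf.hasFDerivAt.comp_hasDerivAt t hg

theorem ContinuousOn.mem_connectedComponentIn_of_mapsTo_Icc {X : Type*} [TopologicalSpace X]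
    {f : ℝ → X} {S : Set X} {a b : ℝ}
    (hf : ContinuousOn f (Icc a b)) (hab : a ≤ b) (hS : MapsTo f (Icc a b) S) :
    f b ∈ connectedComponentIn S (f a) :=
  (isPreconnected_Icc.image f hf).subset_connectedComponentIn
    (mem_image_of_mem f (left_mem_Icc.2 hab)) hS.image_subset
    (mem_image_of_mem f (right_mem_Icc.2 hab))

section HeavyBall

variable {E : Type*} [NormedAddCommGroup E]

noncomputable def totalEnergy (U : E → ℝ) (x v : E) : ℝ := U x + (1 / 2 : ℝ) * ‖v‖ ^ 2

theorem le_totalEnergy (U : E → ℝ) (x v : E) : U x ≤ totalEnergy U x v :=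
  le_add_of_nonneg_right (by positivity)

variable [InnerProductSpace ℝ E] [CompleteSpace E] {U : E → ℝ} {γ : ℝ} {g ξ : ℝ → E}

theorem hasDerivAt_totalEnergy {t : ℝ} (hU : DifferentiableAt ℝ U (g t))
    (hg : HasDerivAt g (ξ t) t) (hξ : HasDerivAt ξ ((-γ) • ξ t - gradient U (g t)) t) :
    HasDerivAt (fun s => totalEnergy U (g s) (ξ s)) (-γ * ‖ξ t‖ ^ 2) t := by
  refine (hU.hasGradientAt.comp_hasDerivAt hg).add (hξ.norm_sq.const_mul (1 / 2 : ℝ))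
    |>.congr_deriv ?_
  rw [inner_sub_right, real_inner_smul_right, real_inner_self_eq_norm_sq,
    real_inner_comm (ξ t)]
  ring

theorem antitoneOn_totalEnergy (hU : Differentiable ℝ U) (hγ : 0 ≤ γ)
    (hg : ∀ t, 0 ≤ t → HasDerivAt g (ξ t) t)
    (hξ : ∀ t, 0 ≤ t → HasDerivAt ξ ((-γ) • ξ t - gradient U (g t)) t) :
    AntitoneOn (fun s => totalEnergy U (g s) (ξ s)) (Ici 0) := by
  have hE t (ht : 0 ≤ t) := hasDerivAt_totalEnergy (hU (g t)) (hg t ht) (hξ t ht)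
  refine antitoneOn_of_hasDerivWithinAt_nonpos (convex_Ici 0)
    (fun t ht => (hE t ht).continuousAt.continuousWithinAt)
    (fun t ht => (hE t (interior_subset ht)).hasDerivWithinAt) fun t _ => ?_
  have : 0 ≤ γ * ‖ξ t‖ ^ 2 := by positivity
  linarith

end HeavyBall

/-- Corollary 3.3, Euclidean instance: the solution of the momentum ODE stays in the
connected component `S₀` of the sublevel set `{x | U x ≤ u}` containing `g 0`,
where `u` is the initial total energy. -/
theorem trajectory_stays_in_sublevel_component
    {E : Type*} [NormedAddCommGroup E] [InnerProductSpace ℝ E] [CompleteSpace E]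
    (U : E → ℝ) (hU : ContDiff ℝ 1 U) (γ : ℝ) (hγ : 0 < γ)
    (g ξ : ℝ → E)
    (hg : ∀ t, 0 ≤ t → HasDerivAt g (ξ t) t)
    (hξ : ∀ t, 0 ≤ t → HasDerivAt ξ ((-γ) • ξ t - gradient U (g t)) t) :
    ∀ t, 0 ≤ t →
      g t ∈ connectedComponentIn
        {x : E | U x ≤ U (g 0) + (1 / 2 : ℝ) * ‖ξ 0‖ ^ 2} (g 0) := by
  intro t ht
  have hanti := antitoneOn_totalEnergy (hU.differentiable one_ne_zero) hγ.le hg hξ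
  have hcont : ContinuousOn g (Icc 0 t) := fun s hs =>
    (hg s hs.1).continuousAt.continuousWithinAt
  refine hcont.mem_connectedComponentIn_of_mapsTo_Icc ht fun s ⟨hs₀, _⟩ => ?_
  calc U (g s) ≤ totalEnergy U (g s) (ξ s) := le_totalEnergy U (g s) (ξ s)
    _ ≤ totalEnergy U (g 0) (ξ 0) := hanti self_mem_Ici hs₀ hs₀
end

section
/- Let E be a finite-dimensional real inner product space, let A : E → E be a skew-adjoint linear map with operator norm ‖A‖ < 2π, and let P := ∑_{n=0}^∞ (Bₙ⁺/n!) Aⁿ. Then for every ξ ∈ E, ⟨P ξ, ξ⟩ ≤ ‖ξ‖². (Corollary A.3: ⟨d_ξ log g, ξ⟩ ≤ ‖ξ‖², stated at the level of the operator p(ad_{log g}).) -/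
open RealInnerProductSpace

/-!
For skew-adjoint `A`, `⟪A^(2m+1) ξ, ξ⟫ = 0` and `⟪A^(2m) ξ, ξ⟫ = (-1)^m ‖A^m ξ‖²`, while Euler's
formula `ζ(2m) = (-1)^(m+1) (2π)^(2m) B_{2m} / (2 (2m)!)` shows that `(-1)^m B_{2m} ≤ 0` for
`m ≥ 1`. Hence in `⟪P ξ, ξ⟫ = ∑ (Bₙ⁺/n!) ⟪Aⁿ ξ, ξ⟫` every term after `‖ξ‖²` is nonpositive.
-/

theorem neg_one_pow_mul_bernoulli'_two_mul_nonpos {k : ℕ} (hk : k ≠ 0) :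
    (-1 : ℝ) ^ k * bernoulli' (2 * k) ≤ 0 := by
  have hzeta := (hasSum_zeta_nat hk).nonneg fun n => by positivity
  have hscale : (0 : ℝ) < 2 ^ (2 * k - 1) * Real.pi ^ (2 * k) / (2 * k).factorial := by positivity
  have hsign : 0 ≤ (-1 : ℝ) ^ (k + 1) * bernoulli (2 * k) :=
    (mul_nonneg_iff_of_pos_right hscale).mp (by convert hzeta using 1; ring)
  rw [← bernoulli_eq_bernoulli'_of_ne_one (by omega)]
  linarith [show (-1 : ℝ) ^ (k + 1) * bernoulli (2 * k) = -((-1) ^ k * bernoulli (2 * k)) by ring]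

section SkewAdjoint

variable {E : Type*} [NormedAddCommGroup E] [InnerProductSpace ℝ E] {A : E →L[ℝ] E}

theorem inner_pow_apply_of_skew (hA : ∀ x y : E, ⟪A x, y⟫ = -⟪x, A y⟫) (m : ℕ) (x y : E) :
    ⟪(A ^ m) x, y⟫ = (-1) ^ m * ⟪x, (A ^ m) y⟫ := by
  induction m generalizing x with
  | zero => simp
  | succ m ih =>
    have hx : (A ^ (m + 1)) x = (A ^ m) (A x) := by rw [pow_succ]; rfl
    have hy : (A ^ (m + 1)) y = A ((A ^ m) y) := by rw [pow_succ']; rfl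
    rw [hx, hy, ih, hA]
    ring

theorem inner_pow_two_mul_apply_self_of_skew (hA : ∀ x y : E, ⟪A x, y⟫ = -⟪x, A y⟫)
    (m : ℕ) (x : E) : ⟪(A ^ (2 * m)) x, x⟫ = (-1) ^ m * ‖(A ^ m) x‖ ^ 2 := by
  have hsplit : (A ^ (2 * m)) x = (A ^ m) ((A ^ m) x) := by rw [two_mul, pow_add]; rfl
  rw [hsplit, inner_pow_apply_of_skew hA, real_inner_self_eq_norm_sq]

theorem inner_pow_two_mul_add_one_apply_self_of_skew (hA : ∀ x y : E, ⟪A x, y⟫ = -⟪x, A y⟫)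
    (m : ℕ) (x : E) : ⟪(A ^ (2 * m + 1)) x, x⟫ = 0 := by
  have h := inner_pow_apply_of_skew hA (2 * m + 1) x x
  rw [real_inner_comm ((A ^ (2 * m + 1)) x) x, (odd_two_mul_add_one m).neg_one_pow] at h
  linarith

theorem inner_apply_self_le_of_hasSum_smul_pow (hA : ∀ x y : E, ⟪A x, y⟫ = -⟪x, A y⟫)
    {c : ℕ → ℝ} (hc : ∀ m ≠ 0, (-1) ^ m * c (2 * m) ≤ 0) {P : E →L[ℝ] E}
    (hP : HasSum (fun n ↦ c n • A ^ n) P) (x : E) : ⟪P x, x⟫ ≤ c 0 * ‖x‖ ^ 2 := by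
  have hsum : HasSum (fun n ↦ c n * ⟪(A ^ n) x, x⟫) ⟪P x, x⟫ := by
    simpa [real_inner_smul_right, real_inner_comm x] using
      ((innerSL ℝ x).comp (ContinuousLinearMap.apply ℝ E x)).hasSum hP
  refine hasSum_le (fun n ↦ ?_) hsum (hasSum_ite_eq 0 (c 0 * ‖x‖ ^ 2))
  obtain ⟨m, rfl | rfl⟩ := Nat.even_or_odd' n
  · rcases eq_or_ne m 0 with rfl | hm
    · simp
    · rw [if_neg (by omega), inner_pow_two_mul_apply_self_of_skew hA, ← mul_assoc,
        mul_comm (c _)]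
      exact mul_nonpos_of_nonpos_of_nonneg (hc m hm) (sq_nonneg _)
  · rw [if_neg (by omega), inner_pow_two_mul_add_one_apply_self_of_skew hA, mul_zero]

end SkewAdjoint

theorem dlog_xi_inner_general
    {E : Type*} [NormedAddCommGroup E] [InnerProductSpace ℝ E]
    (A : E →L[ℝ] E) (hskew : ∀ x y : E, ⟪A x, y⟫ = -⟪x, A y⟫)
    (P : E →L[ℝ] E)
    (hP : P = ∑' n : ℕ, ((bernoulli' n : ℝ) / (n.factorial : ℝ)) • A ^ n) :
    ∀ ξ : E, ⟪P ξ, ξ⟫ ≤ ‖ξ‖ ^ 2 := by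
  intro ξ
  by_cases hsum : Summable fun n : ℕ ↦ ((bernoulli' n : ℝ) / (n.factorial : ℝ)) • A ^ n
  · have hc (m : ℕ) (hm : m ≠ 0) :
        (-1) ^ m * ((bernoulli' (2 * m) : ℝ) / ((2 * m).factorial : ℝ)) ≤ 0 := by
      rw [← mul_div_assoc]
      exact div_nonpos_of_nonpos_of_nonneg (neg_one_pow_mul_bernoulli'_two_mul_nonpos hm)
        (Nat.cast_nonneg _)
    have hle := inner_apply_self_le_of_hasSum_smul_pow hskew hc (hP ▸ hsum.hasSum) ξ
    simpa only [bernoulli'_zero, Nat.factorial_zero, Rat.cast_one, Nat.cast_one, div_one,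
      one_mul] using hle
  · rw [hP, tsum_eq_zero_of_not_summable hsum]
    simp

/-- Corollary A.3, stated at the level of the operator `P = p(A) = ∑ (Bₙ⁺/n!) Aⁿ`
(with `Bₙ⁺ = bernoulli'`, the Bernoulli numbers with `B₁⁺ = 1/2`): if `A` is
skew-adjoint with `‖A‖ < 2π`, then `⟨P ξ, ξ⟩ ≤ ‖ξ‖²`. -/
theorem dlog_xi_inner
    {E : Type*} [NormedAddCommGroup E] [InnerProductSpace ℝ E] [FiniteDimensional ℝ E]
    (A : E →L[ℝ] E) (hskew : ∀ x y : E, ⟪A x, y⟫ = -⟪x, A y⟫)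
    (hA : ‖A‖ < 2 * Real.pi)
    (P : E →L[ℝ] E)
    (hP : P = ∑' n : ℕ, ((bernoulli' n : ℝ) / (n.factorial : ℝ)) • A ^ n) :
    ∀ ξ : E, ⟪P ξ, ξ⟫ ≤ ‖ξ‖ ^ 2 :=
  dlog_xi_inner_general A hskew P hP
end

section
/- Let E be a finite-dimensional real inner product space, let a ∈ (0, 2π), let A : E → E be a skew-adjoint linear map with operator norm ‖A‖ ≤ a, and let P := ∑_{n=0}^∞ (Bₙ⁺/n!) Aⁿ. Then ‖P − Id‖_op ≤ q(a), where q(a) denotes the modulus of the complex number a·i/(1 − exp(−a·i)) − 1, i.e. q(a) = |p(ai) − 1| with p(z) = z/(1 − e^{−z}). (Corollary A.4: ‖d log g − Id‖ ≤ q(a) when d(g, e) ≤ a/A with A = max_{‖X‖=1}‖ad_X‖, stated at the level of the operator p(ad_{log g}).) -/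
/-!
Write `p(A) - 1 = A/2 + Q` with `Q = ∑_{n ≥ 2} (Bₙ⁺/n!) Aⁿ`. Odd Bernoulli numbers beyond `B₁`
vanish, so `Q` is a series in even powers of the skew-adjoint `A`: it is self-adjoint and commutes
with `A`. The C⋆-identity then gives `‖A/2 + Q‖² = ‖Q² - A²/4‖ ≤ (a/2)² + T(a)²`, where
`T(a) = ∑_{n ≥ 2} |Bₙ⁺|/n! aⁿ` (finite for `a < 2π` since `|B₂ₖ|/(2k)! ≤ 2ζ(2)/(2π)^{2k}`).
On the scalar side the signs of `B₂ₖ` alternate (`ζ(2k) > 0`), so every term of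
`p(ai) - 1 - ai/2 = ∑_{n ≥ 2} (Bₙ⁺/n!) (ai)ⁿ` equals `-|Bₙ⁺|/n! aⁿ`: the complex number
`p(ai) - 1 = -T(a) + (a/2) i` has modulus exactly `√((a/2)² + T(a)²)`.
-/

open RealInnerProductSpace Real Nat Finset

theorem abs_bernoulli_two_mul {k : ℕ} (hk : k ≠ 0) :
    |(bernoulli (2 * k) : ℝ)| = (-1 : ℝ) ^ (k + 1) * bernoulli (2 * k) := by
  have hζ := (hasSum_zeta_nat hk).nonneg fun n => by positivity
  have hsign : 0 ≤ (-1 : ℝ) ^ (k + 1) * bernoulli (2 * k) :=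
    nonneg_of_mul_nonneg_left (b := 2 ^ (2 * k - 1) * π ^ (2 * k) / (2 * k)!)
      (by convert hζ using 1; ring) (by positivity)
  rw [← abs_of_nonneg hsign, abs_mul, abs_neg_one_pow, one_mul]

theorem hasSum_zeta_nat_eq_abs_bernoulli {k : ℕ} (hk : k ≠ 0) :
    HasSum (fun n : ℕ => 1 / (n : ℝ) ^ (2 * k))
      ((2 * π) ^ (2 * k) / 2 * (|(bernoulli (2 * k) : ℝ)| / (2 * k)!)) := by
  have h2k : (2 : ℝ) ^ (2 * k) = 2 ^ (2 * k - 1) * 2 := by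
    rw [← pow_succ, Nat.sub_add_cancel (by omega)]
  convert hasSum_zeta_nat hk using 1
  rw [abs_bernoulli_two_mul hk, mul_pow, h2k]
  ring

theorem abs_bernoulli_two_mul_div_factorial_le {k : ℕ} (hk : k ≠ 0) :
    |(bernoulli (2 * k) : ℝ)| / (2 * k)! ≤ π ^ 2 / 3 / (2 * π) ^ (2 * k) := by
  have hle := hasSum_le (fun n => ?_) (hasSum_zeta_nat_eq_abs_bernoulli hk) hasSum_zeta_two
  · rw [le_div_iff₀ (by positivity)]
    linarith
  · rcases n.eq_zero_or_pos with rfl | hn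
    · simp [hk]
    · gcongr
      · exact_mod_cast hn
      · omega

theorem abs_bernoulli'_div_factorial_le {n : ℕ} (hn : 2 ≤ n) :
    |(bernoulli' n : ℝ)| / n ! ≤ π ^ 2 / 3 / (2 * π) ^ n := by
  rcases n.even_or_odd' with ⟨k, rfl | rfl⟩
  · rw [← bernoulli_eq_bernoulli'_of_ne_one (by omega)]
    exact abs_bernoulli_two_mul_div_factorial_le (by omega)
  · rw [bernoulli'_eq_zero_of_odd (odd_two_mul_add_one k) (by omega)]
    simp only [Rat.cast_zero, abs_zero, zero_div]
    positivity

theorem bernoulli'_mul_I_pow {n : ℕ} (hn : 2 ≤ n) :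
    (bernoulli' n : ℂ) * Complex.I ^ n = -(|(bernoulli' n : ℝ)| : ℝ) := by
  rcases n.even_or_odd' with ⟨k, rfl | rfl⟩
  · rw [← bernoulli_eq_bernoulli'_of_ne_one (by omega), abs_bernoulli_two_mul (by omega), pow_mul,
      Complex.I_sq]
    push_cast
    ring
  · simp [bernoulli'_eq_zero_of_odd (odd_two_mul_add_one k) (by omega)]

noncomputable def bernoulli'Tail (a : ℝ) : ℝ :=
  ∑' n, |(bernoulli' (n + 2) : ℝ)| / (n + 2)! * a ^ (n + 2)

theorem summable_bernoulli'Tail {a : ℝ} (ha₀ : 0 ≤ a) (ha : a < 2 * π) :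
    Summable fun n => |(bernoulli' (n + 2) : ℝ)| / (n + 2)! * a ^ (n + 2) := by
  have hgeom : Summable fun n => π ^ 2 / 3 * (a / (2 * π)) ^ (n + 2) :=
    (summable_nat_add_iff 2).mpr <| (summable_geometric_of_lt_one (by positivity) <|
      (div_lt_one (by positivity)).mpr ha).mul_left _
  refine hgeom.of_nonneg_of_le (fun n => by positivity) fun n => ?_
  calc |(bernoulli' (n + 2) : ℝ)| / (n + 2)! * a ^ (n + 2)
      ≤ π ^ 2 / 3 / (2 * π) ^ (n + 2) * a ^ (n + 2) := by
        gcongr ?_ * _; exact abs_bernoulli'_div_factorial_le (by omega)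
    _ = π ^ 2 / 3 * (a / (2 * π)) ^ (n + 2) := by rw [div_pow]; ring

namespace PowerSeries

theorem hasSum_coeff_mul_mul_pow {R : Type*} [NormedCommRing R] [CompleteSpace R]
    {f g : R⟦X⟧} {z : R} (hf : Summable fun n => ‖coeff n f * z ^ n‖)
    (hg : Summable fun n => ‖coeff n g * z ^ n‖) :
    HasSum (fun n => coeff n (f * g) * z ^ n)
      ((∑' n, coeff n f * z ^ n) * ∑' n, coeff n g * z ^ n) := by
  have hcauchy : ∀ n, coeff n (f * g) * z ^ n =
      ∑ kl ∈ antidiagonal n, coeff kl.1 f * z ^ kl.1 * (coeff kl.2 g * z ^ kl.2) := by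
    intro n
    rw [coeff_mul, sum_mul]
    refine sum_congr rfl fun kl hkl => ?_
    rw [← mem_antidiagonal.mp hkl, pow_add]
    ring
  simp_rw [hcauchy, tsum_mul_tsum_eq_tsum_sum_antidiagonal_of_summable_norm hf hg]
  exact (summable_norm_sum_mul_antidiagonal_of_summable_norm hf hg).of_norm.hasSum

theorem hasSum_coeff_X_mul_pow {R : Type*} [Semiring R] [TopologicalSpace R]
    (z : R) : HasSum (fun n => coeff n (X : R⟦X⟧) * z ^ n) z := by
  convert hasSum_single 1 fun n hn => ?_ using 1
  · simp
  · simp [coeff_X, hn]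

theorem hasSum_coeff_exp_mul_pow (z : ℂ) :
    HasSum (fun n => coeff n (exp ℂ) * z ^ n) (Complex.exp z) := by
  rw [Complex.exp_eq_exp_ℂ]
  have hterm : (fun n => coeff n (exp ℂ) * z ^ n) = fun n => z ^ n / n ! := by
    funext n
    simp [coeff_exp, div_eq_inv_mul]
  rw [hterm]
  exact NormedSpace.expSeries_div_hasSum_exp z

end PowerSeries

theorem Complex.exp_ne_one_of_ne_zero_of_norm_lt {z : ℂ} (hz : z ≠ 0) (hz' : ‖z‖ < 2 * π) :
    exp z ≠ 1 := by
  rw [Ne, exp_eq_one_iff]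
  rintro ⟨n, rfl⟩
  have hn : n ≠ 0 := by rintro rfl; simp at hz
  have hn₁ : 1 ≤ |(n : ℝ)| := by exact_mod_cast Int.one_le_abs hn
  rw [norm_mul, norm_intCast, norm_mul, norm_mul, Complex.norm_I, Complex.norm_real,
    Complex.norm_ofNat, norm_of_nonneg pi_pos.le] at hz'
  nlinarith [pi_pos]

open PowerSeries in
theorem hasSum_bernoulli'_div_factorial_mul_pow {z : ℂ} (hz : z ≠ 0) (hz' : ‖z‖ < 2 * π) :
    HasSum (fun n => (bernoulli' n : ℂ) / n ! * z ^ n) (z / (1 - Complex.exp (-z))) := by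
  have hcoeff : ∀ n,
      coeff n (bernoulli'PowerSeries ℂ) * z ^ n = (bernoulli' n : ℂ) / n ! * z ^ n := by
    simp [bernoulli'PowerSeries]
  have hB : Summable fun n => ‖coeff n (bernoulli'PowerSeries ℂ) * z ^ n‖ := by
    refine (summable_nat_add_iff 2).mp <|
      (summable_bernoulli'Tail (norm_nonneg z) hz').congr fun n => ?_
    simp [hcoeff]
  have hE : Summable fun n => ‖coeff n (exp ℂ) * z ^ n‖ :=
    (Real.summable_pow_div_factorial ‖z‖).congr fun n => by simp [coeff_exp, div_eq_inv_mul]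
  have hX : Summable fun n => ‖coeff n (X : ℂ⟦X⟧) * z ^ n‖ :=
    summable_of_ne_finset_zero (s := {1}) fun n hn => by simp_all [coeff_X]
  set S := ∑' n, coeff n (bernoulli'PowerSeries ℂ) * z ^ n
  have hSexp : HasSum (fun n => coeff n (bernoulli'PowerSeries ℂ * exp ℂ) * z ^ n)
      (S * Complex.exp z) := by
    rw [← (hasSum_coeff_exp_mul_pow z).tsum_eq]
    exact hasSum_coeff_mul_mul_pow hB hE
  have hXexp : HasSum (fun n => coeff n (X * exp ℂ) * z ^ n) (z * Complex.exp z) := by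
    have := hasSum_coeff_mul_mul_pow hX hE
    rwa [(hasSum_coeff_exp_mul_pow z).tsum_eq, (hasSum_coeff_X_mul_pow z).tsum_eq] at this
  have hsplit : bernoulli'PowerSeries ℂ * exp ℂ = X * exp ℂ + bernoulli'PowerSeries ℂ := by
    rw [← bernoulli'PowerSeries_mul_exp_sub_one, mul_sub, mul_one, sub_add_cancel]
  have hS : S * Complex.exp z = z * Complex.exp z + S := by
    refine hSexp.unique ?_
    simpa only [hsplit, map_add, add_mul] using hXexp.add hB.of_norm.hasSum
  have hS' : S = z / (1 - Complex.exp (-z)) := by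
    have : Complex.exp z - 1 ≠ 0 :=
      sub_ne_zero.mpr (Complex.exp_ne_one_of_ne_zero_of_norm_lt hz hz')
    rw [Complex.exp_neg]
    field_simp
    linear_combination hS
  simp_rw [← hcoeff, ← hS']
  exact hB.of_norm.hasSum

theorem norm_sq_mul_I_div_one_sub_exp_sub_one {a : ℝ} (ha₀ : 0 < a) (ha : a < 2 * π) :
    ‖a * Complex.I / (1 - Complex.exp (-(a * Complex.I))) - 1‖ ^ 2 =
      (a / 2) ^ 2 + bernoulli'Tail a ^ 2 := by
  set z : ℂ := a * Complex.I with hz_def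
  have hz : ‖z‖ = a := by simp [z, abs_of_pos ha₀]
  have hsum := (hasSum_nat_add_iff' 2).mpr <|
    hasSum_bernoulli'_div_factorial_mul_pow (z := z) (by simp [z, ha₀.ne']) (hz ▸ ha)
  have hterm : ∀ n, (bernoulli' (n + 2) : ℂ) / (n + 2)! * z ^ (n + 2) =
      ((-(|(bernoulli' (n + 2) : ℝ)| / (n + 2)! * a ^ (n + 2)) : ℝ) : ℂ) := by
    intro n
    rw [mul_pow, div_mul_eq_mul_div, mul_left_comm, bernoulli'_mul_I_pow (by omega)]
    push_cast
    ring
  simp_rw [hterm] at hsum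
  have htail :
      z / (1 - Complex.exp (-z)) - 1 = (-bernoulli'Tail a : ℝ) + (a / 2 : ℝ) * Complex.I := by
    have h := hsum.unique <|
      Complex.hasSum_ofReal.mpr (summable_bernoulli'Tail ha₀.le ha).hasSum.neg
    simp only [sum_range_succ, sum_range_zero, bernoulli'_zero, bernoulli'_one] at h
    rw [bernoulli'Tail]
    push_cast at h ⊢
    linear_combination h + hz_def / 2
  rw [htail, Complex.sq_norm, Complex.normSq_add_mul_I]
  ring

theorem CStarRing.norm_add_sq_le_of_star_eq_neg {R : Type*} [NonUnitalNormedRing R] [StarRing R]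
    [CStarRing R] {k q : R} (hk : star k = -k) (hq : IsSelfAdjoint q) (hkq : Commute k q) :
    ‖k + q‖ ^ 2 ≤ ‖k‖ ^ 2 + ‖q‖ ^ 2 :=
  calc ‖k + q‖ ^ 2 = ‖star (k + q) * (k + q)‖ := by rw [CStarRing.norm_star_mul_self, sq]
    _ = ‖q * q - k * k‖ := by
      rw [star_add, hk, hq.star_eq, neg_add_eq_sub, sub_mul, mul_add, mul_add, hkq.eq]
      abel_nf
    _ ≤ ‖k‖ ^ 2 + ‖q‖ ^ 2 := by
      rw [add_comm, sq, sq]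
      exact (norm_sub_le _ _).trans (add_le_add (norm_mul_le _ _) (norm_mul_le _ _))

section Operator

variable {R : Type*} [NormedRing R] [NormedAlgebra ℝ R] {A : R} {a : ℝ}

theorem norm_bernoulli'_smul_pow_add_two_le (hA : ‖A‖ ≤ a) (n : ℕ) :
    ‖((bernoulli' (n + 2) : ℝ) / (n + 2)!) • A ^ (n + 2)‖ ≤
      |(bernoulli' (n + 2) : ℝ)| / (n + 2)! * a ^ (n + 2) := by
  rw [norm_smul, norm_div, Real.norm_eq_abs, RCLike.norm_natCast]
  gcongr
  exact (norm_pow_le' A (by omega)).trans (pow_le_pow_left₀ (norm_nonneg A) hA _)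

theorem summable_norm_bernoulli'_smul_pow_add_two (hA : ‖A‖ ≤ a) (ha : a < 2 * π) :
    Summable fun n => ‖((bernoulli' (n + 2) : ℝ) / (n + 2)!) • A ^ (n + 2)‖ :=
  (summable_bernoulli'Tail ((norm_nonneg A).trans hA) ha).of_nonneg_of_le (fun _ => norm_nonneg _)
    (norm_bernoulli'_smul_pow_add_two_le hA)

theorem norm_tsum_bernoulli'_smul_pow_add_two_le (hA : ‖A‖ ≤ a) (ha : a < 2 * π) :
    ‖∑' n, ((bernoulli' (n + 2) : ℝ) / (n + 2)!) • A ^ (n + 2)‖ ≤ bernoulli'Tail a := by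
  have hs := summable_norm_bernoulli'_smul_pow_add_two hA ha
  exact (norm_tsum_le_tsum_norm hs).trans <|
    hs.tsum_le_tsum (norm_bernoulli'_smul_pow_add_two_le hA)
      (summable_bernoulli'Tail ((norm_nonneg A).trans hA) ha)

theorem tsum_bernoulli'_smul_pow [CompleteSpace R] (hA : ‖A‖ ≤ a) (ha : a < 2 * π) :
    ∑' n, ((bernoulli' n : ℝ) / n !) • A ^ n =
      1 + (2⁻¹ : ℝ) • A + ∑' n, ((bernoulli' (n + 2) : ℝ) / (n + 2)!) • A ^ (n + 2) := by
  have hsum := (summable_nat_add_iff (f := fun n => ((bernoulli' n : ℝ) / n !) • A ^ n) 2).mp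
    (summable_norm_bernoulli'_smul_pow_add_two hA ha).of_norm
  rw [← hsum.sum_add_tsum_nat_add 2]
  norm_num [sum_range_succ, bernoulli'_one]

theorem commute_tsum_bernoulli'_smul_pow_add_two (A : R) :
    Commute A (∑' n, ((bernoulli' (n + 2) : ℝ) / (n + 2)!) • A ^ (n + 2)) :=
  Commute.tsum_right A fun _ => ((Commute.refl A).pow_right _).smul_right _

theorem isSelfAdjoint_tsum_bernoulli'_smul_pow_add_two [StarRing R] [StarModule ℝ R]
    [ContinuousStar R] (hA : star A = -A) :
    IsSelfAdjoint (∑' n, ((bernoulli' (n + 2) : ℝ) / (n + 2)!) • A ^ (n + 2)) := by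
  refine (tsum_star).trans (tsum_congr fun n => ?_)
  rcases Nat.even_or_odd (n + 2) with he | ho
  · rw [star_smul, star_trivial, star_pow, hA, he.neg_pow]
  · simp [bernoulli'_eq_zero_of_odd ho (by omega)]

theorem norm_sq_tsum_bernoulli'_smul_pow_sub_one_le [CompleteSpace R] [StarRing R] [CStarRing R]
    [StarModule ℝ R] (hskew : star A = -A) (hA : ‖A‖ ≤ a) (ha : a < 2 * π) :
    ‖∑' n, ((bernoulli' n : ℝ) / n !) • A ^ n - 1‖ ^ 2 ≤ (a / 2) ^ 2 + bernoulli'Tail a ^ 2 := by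
  rw [tsum_bernoulli'_smul_pow hA ha, add_assoc, add_sub_cancel_left]
  have hhalf : star ((2⁻¹ : ℝ) • A) = -((2⁻¹ : ℝ) • A) := by
    rw [star_smul, star_trivial, hskew, smul_neg]
  refine (CStarRing.norm_add_sq_le_of_star_eq_neg hhalf
    (isSelfAdjoint_tsum_bernoulli'_smul_pow_add_two hskew)
    ((commute_tsum_bernoulli'_smul_pow_add_two A).smul_left _)).trans ?_
  rw [norm_smul, Real.norm_of_nonneg (by norm_num)]
  gcongr
  · linarith
  · exact norm_tsum_bernoulli'_smul_pow_add_two_le hA ha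

end Operator

/-- Corollary A.4, stated at the level of the operator `P = p(A) = ∑ (Bₙ⁺/n!) Aⁿ`
(with `Bₙ⁺ = bernoulli'`, the Bernoulli numbers with `B₁⁺ = 1/2`): if `A` is
skew-adjoint with `‖A‖ ≤ a < 2π`, then `‖P - Id‖ ≤ q(a) = |a·i/(1 − e^{−a·i}) − 1|`. -/
theorem dlog_minus_id_bound
    {E : Type*} [NormedAddCommGroup E] [InnerProductSpace ℝ E] [FiniteDimensional ℝ E]
    (a : ℝ) (ha0 : 0 < a) (ha2π : a < 2 * Real.pi)
    (A : E →L[ℝ] E) (hskew : ∀ x y : E, ⟪A x, y⟫ = -⟪x, A y⟫)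
    (hA : ‖A‖ ≤ a)
    (P : E →L[ℝ] E)
    (hP : P = ∑' n : ℕ, ((bernoulli' n : ℝ) / (n.factorial : ℝ)) • A ^ n) :
    ‖P - ContinuousLinearMap.id ℝ E‖ ≤
      ‖(a : ℂ) * Complex.I / (1 - Complex.exp (-((a : ℂ) * Complex.I))) - 1‖ := by
  have hstar : star A = -A := by
    rw [ContinuousLinearMap.star_eq_adjoint, eq_comm, ContinuousLinearMap.eq_adjoint_iff]
    intro x y
    rw [neg_apply, inner_neg_left, hskew, neg_neg]
  rw [← pow_le_pow_iff_left₀ (norm_nonneg _) (norm_nonneg _) two_ne_zero,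
    norm_sq_mul_I_div_one_sub_exp_sub_one ha0 ha2π, hP, ← ContinuousLinearMap.one_def]
  exact norm_sq_tsum_bernoulli'_smul_pow_sub_one_le hstar hA ha2π
end
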